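/- Let F : ℝ → ℝ be continuous, nonnegative, bounded, and assume F(m) = 0 for some m ∈ ℝ. Let v be a bounded function on ℝ^n × (0,1) with |∇v| ≤ M, and for R ≥ 2 define w_R(x,y) := m + min(1, max(0, |x| − (R−1))) · (v(x,y) − m) on C_R. Then w_R = v on ∂B_R × (0,1), w_R = m on C_{R−1}, |w_R| ≤ |m| + ‖v‖_∞, and the energy 𝓔_R(w_R) := (1/2)∫_{C_R} y^a|∇w_R|² + ∫_{B_R×{0}} F(w_R(·,0)) is bounded by C R^{n−1} for a constant C depending only on n, a, M, ‖v‖_∞, |m|, and ‖F‖_∞. -/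

import Mathlib

/-!
Write `w_R = m + φ_R (v - m)` with the radial cutoff `φ_R`, which vanishes on `B_{R-1}`, equals `1`
outside `B_R` and is `1`-Lipschitz. Inside `B_{R-1}` the competitor is locally the constant `m`,
so both energy densities vanish there (`F m = 0`). On the annulus `B_R \ B_{R-1}` the product rule
bounds `|∇w_R|` by `M + ‖v - m‖_∞`, and `F ≤ ‖F‖_∞`. The energy is therefore at most a constant
(involving `∫₀¹ y^a dy < ∞`, as `a > -1`) times the volume of the annulus, which is `O(R^{n-1})`.

Since `fderiv` is `0` wherever `w_R` is not differentiable, only points of differentiability need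
care: on the sphere `|x| = R - 1` the Lipschitz bound replaces the product rule, and in the open
annulus `v = m + (w_R - m) / φ_R` is differentiable as well.
-/

open MeasureTheory Metric Set Filter Topology
open scoped NNReal

def blend {X : Type*} (φ : X → ℝ) (m : ℝ) (v : X → ℝ) (x : X) : ℝ := m + φ x * (v x - m)

lemma abs_blend_le {X : Type*} {φ v : X → ℝ} {m K : ℝ} {x : X} (hφ₀ : 0 ≤ φ x) (hφ₁ : φ x ≤ 1)
    (hv : |v x| ≤ K) : |blend φ m v x| ≤ |m| + K := by
  calc |blend φ m v x| = |(1 - φ x) * m + φ x * v x| := by rw [blend]; ring_nf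
    _ ≤ (1 - φ x) * |m| + φ x * |v x| := by
      refine (abs_add_le _ _).trans_eq ?_
      rw [abs_mul, abs_mul, abs_of_nonneg (sub_nonneg.2 hφ₁), abs_of_nonneg hφ₀]
    _ ≤ |m| + K := by nlinarith [abs_nonneg m, abs_nonneg (v x)]

section Blend

variable {E : Type*} [NormedAddCommGroup E] [NormedSpace ℝ E] {φ v : E → ℝ} {m : ℝ} {p : E}

lemma fderiv_blend_eq_zero (hφ : φ =ᶠ[𝓝 p] 0) : fderiv ℝ (blend φ m v) p = 0 := by
  have hconst : blend φ m v =ᶠ[𝓝 p] fun _ ↦ m := by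
    filter_upwards [hφ] with q hq
    simp [blend, hq]
  rw [hconst.fderiv_eq, fderiv_const_apply]

lemma norm_fderiv_blend_le_of_eq_zero {L : ℝ≥0} {B : ℝ} (hφ : LipschitzWith L φ)
    (hp : φ p = 0) (hv : ∀ q, |v q - m| ≤ B) : ‖fderiv ℝ (blend φ m v) p‖ ≤ L * B := by
  have hB : 0 ≤ B := (abs_nonneg _).trans (hv p)
  by_cases hdiff : DifferentiableAt ℝ (blend φ m v) p
  · refine hdiff.hasFDerivAt.le_of_lip' (by positivity) (Eventually.of_forall fun q ↦ ?_)
    have hφq : |φ q| ≤ L * ‖q - p‖ := by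
      simpa [hp, dist_eq_norm] using hφ.dist_le_mul q p
    calc ‖blend φ m v q - blend φ m v p‖ = |φ q| * |v q - m| := by simp [blend, hp]
      _ ≤ L * ‖q - p‖ * B := mul_le_mul hφq (hv q) (abs_nonneg _) (by positivity)
      _ = L * B * ‖q - p‖ := by ring
  · rw [fderiv_zero_of_not_differentiableAt hdiff, norm_zero]
    positivity

lemma norm_fderiv_blend_le_of_pos {L B M : ℝ} (hφ : DifferentiableAt ℝ φ p)
    (hφL : ‖fderiv ℝ φ p‖ ≤ L) (hp₀ : 0 < φ p) (hp₁ : φ p ≤ 1) (hB : |v p - m| ≤ B)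
    (hM : ‖fderiv ℝ v p‖ ≤ M) : ‖fderiv ℝ (blend φ m v) p‖ ≤ M + L * B := by
  have hM₀ : 0 ≤ M := (norm_nonneg _).trans hM
  have hL₀ : 0 ≤ L := (norm_nonneg _).trans hφL
  have hB₀ : 0 ≤ B := (abs_nonneg _).trans hB
  by_cases hdiff : DifferentiableAt ℝ (blend φ m v) p
  swap
  · rw [fderiv_zero_of_not_differentiableAt hdiff, norm_zero]
    positivity
  have hv : DifferentiableAt ℝ v p := by
    have hrecover : (fun q ↦ m + (blend φ m v q - m) * (φ q)⁻¹) =ᶠ[𝓝 p] v := by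
      filter_upwards [hφ.continuousAt.eventually_ne hp₀.ne'] with q hq
      simp only [blend]
      field_simp
      ring
    exact (((hdiff.sub_const m).mul (hφ.inv hp₀.ne')).const_add m).congr_of_eventuallyEq
      hrecover.symm
  rw [show blend φ m v = fun q ↦ m + φ q * (v q - m) from rfl, fderiv_const_add,
    fderiv_fun_mul hφ (hv.sub_const m), fderiv_sub_const]
  calc ‖φ p • fderiv ℝ v p + (v p - m) • fderiv ℝ φ p‖
      ≤ |φ p| * ‖fderiv ℝ v p‖ + |v p - m| * ‖fderiv ℝ φ p‖ := by
        refine (norm_add_le _ _).trans_eq ?_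
        rw [norm_smul, norm_smul, Real.norm_eq_abs, Real.norm_eq_abs]
    _ ≤ 1 * M + B * L := by
        rw [abs_of_pos hp₀]
        gcongr
    _ = M + L * B := by ring

end Blend

section Cutoff

variable {E : Type*} [NormedAddCommGroup E] {R : ℝ} {x : E}

def annularCutoff (R : ℝ) (x : E) : ℝ := min 1 (max 0 (‖x‖ - (R - 1)))

lemma annularCutoff_nonneg : 0 ≤ annularCutoff R x :=
  le_min zero_le_one (le_max_left _ _)

lemma annularCutoff_le_one : annularCutoff R x ≤ 1 := min_le_left _ _

lemma annularCutoff_eq_zero (hx : ‖x‖ ≤ R - 1) : annularCutoff R x = 0 := by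
  rw [annularCutoff, max_eq_left (by linarith), min_eq_right zero_le_one]

lemma annularCutoff_eq_one (hx : R ≤ ‖x‖) : annularCutoff R x = 1 := by
  rw [annularCutoff, max_eq_right (by linarith), min_eq_left (by linarith)]

lemma annularCutoff_pos (hx : R - 1 < ‖x‖) : 0 < annularCutoff R x :=
  lt_min one_pos (lt_max_of_lt_right (by linarith))

lemma lipschitzWith_annularCutoff : LipschitzWith 1 (annularCutoff (E := E) R) := by
  have hshift : LipschitzWith 1 fun y : E ↦ ‖y‖ - (R - 1) :=
    LipschitzWith.of_le_add fun y z ↦ by linarith [norm_sub_norm_le y z, dist_eq_norm y z]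
  exact (hshift.const_max 0).const_min 1

lemma annularCutoff_eventuallyEq_zero (hx : ‖x‖ < R - 1) : annularCutoff R =ᶠ[𝓝 x] 0 := by
  filter_upwards [continuous_norm.continuousAt.eventually_lt continuousAt_const hx] with y hy
  exact annularCutoff_eq_zero hy.le

lemma annularCutoff_eventuallyEq (hx₁ : R - 1 < ‖x‖) (hx₂ : ‖x‖ < R) :
    annularCutoff R =ᶠ[𝓝 x] fun y ↦ ‖y‖ - (R - 1) := by
  filter_upwards [continuousAt_const.eventually_lt continuous_norm.continuousAt hx₁,
    continuous_norm.continuousAt.eventually_lt continuousAt_const hx₂] with y hy₁ hy₂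
  rw [annularCutoff, max_eq_right (by linarith), min_eq_right (by linarith)]

lemma differentiableAt_annularCutoff {E : Type*} [NormedAddCommGroup E] [InnerProductSpace ℝ E]
    {R : ℝ} {x : E} (hR : 1 ≤ R) (hx₁ : R - 1 < ‖x‖) (hx₂ : ‖x‖ < R) :
    DifferentiableAt ℝ (annularCutoff R) x := by
  have hx : x ≠ 0 := norm_pos_iff.1 (by linarith)
  exact ((differentiableAt_id.norm ℝ hx).sub_const _).congr_of_eventuallyEq
    (annularCutoff_eventuallyEq hx₁ hx₂)

end Cutoff

section Gradient

variable {E F : Type*} [NormedAddCommGroup E] [InnerProductSpace ℝ E] [NormedAddCommGroup F]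
  [NormedSpace ℝ F] {v : E × F → ℝ} {m R : ℝ} {p : E × F}

lemma fderiv_blend_annularCutoff_eq_zero (hp : ‖p.1‖ < R - 1) :
    fderiv ℝ (blend (fun q ↦ annularCutoff R q.1) m v) p = 0 :=
  fderiv_blend_eq_zero <| (annularCutoff_eventuallyEq_zero hp).comp_tendsto continuousAt_fst

lemma norm_fderiv_blend_annularCutoff_le {B M : ℝ} (hR : 1 ≤ R) (hB : ∀ q, |v q - m| ≤ B)
    (hM : ∀ q, ‖fderiv ℝ v q‖ ≤ M) (hp₁ : R - 1 ≤ ‖p.1‖) (hp₂ : ‖p.1‖ < R) :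
    ‖fderiv ℝ (blend (fun q ↦ annularCutoff R q.1) m v) p‖ ≤ M + B := by
  have hφ : LipschitzWith 1 fun q : E × F ↦ annularCutoff R q.1 := by
    simpa [Function.comp_def] using lipschitzWith_annularCutoff.comp LipschitzWith.prod_fst
  rcases hp₁.eq_or_lt with hp | hp
  · have hM₀ : 0 ≤ M := (norm_nonneg (fderiv ℝ v p)).trans (hM p)
    have := norm_fderiv_blend_le_of_eq_zero hφ (annularCutoff_eq_zero hp.ge) hB
    push_cast at this
    linarith
  · simpa [Function.comp_def] using norm_fderiv_blend_le_of_pos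
      ((differentiableAt_annularCutoff hR hp hp₂).comp p differentiableAt_fst)
      (norm_fderiv_le_of_lipschitz ℝ hφ) (annularCutoff_pos hp) annularCutoff_le_one (hB p) (hM p)

end Gradient

lemma measureReal_ball_sdiff_ball_le {E : Type*} [NormedAddCommGroup E] [NormedSpace ℝ E]
    [MeasurableSpace E] [BorelSpace E] [FiniteDimensional ℝ E] (μ : Measure E)
    [μ.IsAddHaarMeasure] (x : E) {r R : ℝ} (hr : 0 < r) (hrR : r ≤ R) :
    μ.real (ball x R \ ball x r) ≤
      (R - r) * Module.finrank ℝ E * R ^ (Module.finrank ℝ E - 1) * μ.real (ball 0 1) := by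
  set d := Module.finrank ℝ E
  have hball : ∀ s, 0 < s → μ.real (ball x s) = s ^ d * μ.real (ball 0 1) := fun s hs ↦ by
    rw [measureReal_def, μ.addHaar_ball_of_pos x hs, ENNReal.toReal_mul,
      ENNReal.toReal_ofReal (by positivity), measureReal_def]
  rw [measureReal_sdiff (ball_subset_ball hrR) measurableSet_ball measure_ball_lt_top.ne,
    hball R (hr.trans_le hrR), hball r hr, ← sub_mul]
  gcongr
  calc R ^ d - r ^ d ≤ |R ^ d - r ^ d| := le_abs_self _
    _ ≤ |R - r| * d * max |R| |r| ^ (d - 1) := abs_pow_sub_pow_le ..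
    _ = (R - r) * d * R ^ (d - 1) := by
      rw [abs_of_nonneg (by linarith), abs_of_pos (by linarith), abs_of_pos hr, max_eq_left hrR]

lemma setIntegral_le_setIntegral_of_eqOn_sdiff {α : Type*} [MeasurableSpace α]
    {μ : Measure α} {s t : Set α} {f g : α → ℝ} (hs : MeasurableSet s) (ht : MeasurableSet t)
    (hts : t ⊆ s) (hg : IntegrableOn g t μ) (hf₀ : ∀ x ∈ s, 0 ≤ f x) (hfg : ∀ x ∈ t, f x ≤ g x)
    (hf : EqOn f 0 (s \ t)) :
    ∫ x in s, f x ∂μ ≤ ∫ x in t, g x ∂μ := by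
  have hle : ∀ x ∈ s, f x ≤ t.indicator g x := fun x hx ↦ by
    by_cases hxt : x ∈ t
    · simpa [hxt] using hfg x hxt
    · simpa [hxt] using (hf ⟨hx, hxt⟩).le
  calc ∫ x in s, f x ∂μ ≤ ∫ x in s, t.indicator g x ∂μ :=
        integral_mono_of_nonneg (ae_restrict_of_forall_mem hs hf₀)
          ((integrable_indicator_iff ht).2 hg).integrableOn (ae_restrict_of_forall_mem hs hle)
    _ = ∫ x in t, g x ∂μ := by rw [setIntegral_indicator ht, inter_eq_right.2 hts]

section Energy

variable {E : Type*} [NormedAddCommGroup E] [MeasurableSpace E] [BorelSpace E] [ProperSpace E]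
  (μ : Measure E) [IsFiniteMeasureOnCompacts μ] {m R : ℝ}

lemma setIntegral_comp_blend_annularCutoff_le {G : ℝ → ℝ} {K : ℝ} (hG₀ : ∀ t, 0 ≤ G t)
    (hGK : ∀ t, G t ≤ K) (hGm : G m = 0) (u : E → ℝ) :
    ∫ x in ball 0 R, G (blend (annularCutoff R) m u x) ∂μ ≤
      K * μ.real (ball 0 R \ ball 0 (R - 1)) := by
  have hinner : EqOn (fun x ↦ G (blend (annularCutoff R) m u x)) 0
      (ball 0 R \ (ball 0 R \ ball 0 (R - 1))) := fun x hx ↦ by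
    have hx : ‖x‖ < R - 1 := by simpa using not_not.1 fun h ↦ hx.2 ⟨hx.1, h⟩
    simp [blend, annularCutoff_eq_zero hx.le, hGm]
  refine (setIntegral_le_setIntegral_of_eqOn_sdiff measurableSet_ball
    (measurableSet_ball.diff measurableSet_ball) sdiff_subset ?_ (fun x _ ↦ hG₀ _)
    (fun x _ ↦ hGK _) hinner).trans_eq ?_
  · exact integrableOn_const (measure_ne_top_of_subset sdiff_subset measure_ball_lt_top.ne)
  · rw [setIntegral_const, smul_eq_mul, mul_comm]

lemma setIntegral_rpow_mul_sq_norm_fderiv_blend_annularCutoff_le [InnerProductSpace ℝ E]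
    [SFinite μ] {v : E × ℝ → ℝ} {a B M : ℝ} (ha : -1 < a) (hR : 1 ≤ R)
    (hB : ∀ q, |v q - m| ≤ B) (hM : ∀ q, ‖fderiv ℝ v q‖ ≤ M) :
    ∫ p in ball 0 R ×ˢ Ioo 0 1,
        p.2 ^ a * ‖fderiv ℝ (blend (fun q ↦ annularCutoff R q.1) m v) p‖ ^ 2 ∂μ.prod volume ≤
      (M + B) ^ 2 * μ.real (ball 0 R \ ball 0 (R - 1)) * ∫ y in Ioo 0 1, y ^ a := by
  set A := ball (0 : E) R \ ball 0 (R - 1)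
  have hA : MeasurableSet A := measurableSet_ball.diff measurableSet_ball
  have hint : IntegrableOn (fun p : E × ℝ ↦ (M + B) ^ 2 * p.2 ^ a) (A ×ˢ Ioo 0 1)
      (μ.prod volume) := by
    rw [IntegrableOn, ← Measure.prod_restrict]
    have hconst : IntegrableOn (fun _ ↦ (M + B) ^ 2) A μ :=
      integrableOn_const (measure_ne_top_of_subset sdiff_subset measure_ball_lt_top.ne)
    exact hconst.mul_prod ((intervalIntegral.integrableOn_Ioo_rpow_iff one_pos).2 ha)
  refine (setIntegral_le_setIntegral_of_eqOn_sdiff (measurableSet_ball.prod measurableSet_Ioo)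
    (hA.prod measurableSet_Ioo) (prod_mono sdiff_subset subset_rfl) hint ?_ ?_ ?_).trans_eq ?_
  · rintro p ⟨-, hy, -⟩
    have := Real.rpow_nonneg hy.le a
    positivity
  · rintro p ⟨⟨hx, hx'⟩, hy, -⟩
    have hgrad := norm_fderiv_blend_annularCutoff_le hR hB hM
      (by simpa using hx') (mem_ball_zero_iff.1 hx)
    have := Real.rpow_nonneg hy.le a
    rw [mul_comm]
    gcongr
  · rintro p ⟨⟨hx, hy⟩, hpA⟩
    have hx' : ‖p.1‖ < R - 1 := by simpa using not_not.1 fun h ↦ hpA ⟨⟨hx, h⟩, hy⟩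
    simp only [fderiv_blend_annularCutoff_eq_zero hx', ContinuousLinearMap.opNorm_zero,
      Pi.zero_apply]
    ring
  · rw [setIntegral_prod_mul (fun _ ↦ (M + B) ^ 2) (fun y ↦ y ^ a), setIntegral_const,
      smul_eq_mul, mul_comm (μ.real A)]

end Energy

theorem competitor_energy_estimate_general
    (n : ℕ) (a : ℝ) (ha : a ∈ Set.Ioo (-1 : ℝ) 1)
    (F : ℝ → ℝ) (hFpos : ∀ t, 0 ≤ F t)
    (KF : ℝ) (hFbd : ∀ t, F t ≤ KF)
    (m : ℝ) (hFm : F m = 0)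
    (v : EuclideanSpace ℝ (Fin n) × ℝ → ℝ) (K M : ℝ)
    (hvbd : ∀ p, |v p| ≤ K)
    (hvgrad : ∀ p, ‖fderiv ℝ v p‖ ≤ M)
    (w : ℝ → EuclideanSpace ℝ (Fin n) × ℝ → ℝ)
    (hw : ∀ R p, w R p = m + min 1 (max 0 (‖p.1‖ - (R - 1))) * (v p - m)) :
    (∀ R : ℝ, 2 ≤ R →
      -- agrees with v on the lateral boundary ∂B_R × (0,1)
      (∀ x : EuclideanSpace ℝ (Fin n), ∀ y ∈ Set.Ioo (0:ℝ) 1,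
        ‖x‖ = R → w R (x, y) = v (x, y))
      -- equals m on the smaller cylinder C_{R-1}
      ∧ (∀ x : EuclideanSpace ℝ (Fin n), ∀ y ∈ Set.Ioo (0:ℝ) 1,
          ‖x‖ < R - 1 → w R (x, y) = m)
      -- uniform bound
      ∧ (∀ p, |w R p| ≤ |m| + K))
    -- energy estimate: 𝓔_R(w_R) ≤ C R^{n-1}
    ∧ (∃ C : ℝ, 0 < C ∧ ∀ R : ℝ, 2 ≤ R →
        (1 / 2) * (∫ p in (Metric.ball (0 : EuclideanSpace ℝ (Fin n)) R) ×ˢ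
              Set.Ioo (0:ℝ) 1, p.2 ^ a * ‖fderiv ℝ (w R) p‖ ^ 2)
          + (∫ x in Metric.ball (0 : EuclideanSpace ℝ (Fin n)) R, F (w R (x, 0)))
        ≤ C * R ^ (n - 1 : ℕ)) := by
  have hw' : ∀ R, w R = blend (fun q ↦ annularCutoff R q.1) m v := fun R ↦ funext (hw R)
  have hB : ∀ q, |v q - m| ≤ K + |m| := fun q ↦ (abs_sub _ _).trans (by linarith [hvbd q])
  refine ⟨fun R hR ↦ ⟨fun x y _ hx ↦ ?_, fun x y _ hx ↦ ?_, fun p ↦ ?_⟩, ?_⟩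
  · simp [hw', blend, annularCutoff_eq_one hx.ge]
  · simp [hw', blend, annularCutoff_eq_zero hx.le]
  · rw [hw']
    exact abs_blend_le annularCutoff_nonneg annularCutoff_le_one (hvbd p)
  set c := volume.real (ball (0 : EuclideanSpace ℝ (Fin n)) 1)
  set Ia := ∫ y in Ioo (0 : ℝ) 1, y ^ a
  set D := (M + (K + |m|)) ^ 2 / 2 * Ia + KF
  have hIa : 0 ≤ Ia := setIntegral_nonneg measurableSet_Ioo fun y hy ↦ Real.rpow_nonneg hy.1.le a
  have hD : 0 ≤ D := by
    have := (hFpos m).trans (hFbd m)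
    positivity
  refine ⟨D * (n * c) + 1, by positivity, fun R hR ↦ ?_⟩
  set V := volume.real (ball (0 : EuclideanSpace ℝ (Fin n)) R \ ball 0 (R - 1))
  have hvol : V ≤ n * R ^ (n - 1) * c := by
    simpa using measureReal_ball_sdiff_ball_le volume (0 : EuclideanSpace ℝ (Fin n))
      (by linarith : 0 < R - 1) (by linarith : R - 1 ≤ R)
  have hgrad := setIntegral_rpow_mul_sq_norm_fderiv_blend_annularCutoff_le (R := R) volume ha.1
    (by linarith) hB hvgrad
  have hpot := setIntegral_comp_blend_annularCutoff_le (R := R) volume hFpos hFbd hFm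
    (fun x ↦ v (x, 0))
  rw [hw']
  calc _ ≤ 1 / 2 * ((M + (K + |m|)) ^ 2 * V * Ia) + KF * V :=
        add_le_add (mul_le_mul_of_nonneg_left hgrad one_half_pos.le) hpot
    _ = D * V := by ring
    _ ≤ D * (n * R ^ (n - 1) * c) := by gcongr
    _ ≤ (D * (n * c) + 1) * R ^ (n - 1) := by
      have := pow_nonneg (by linarith : (0 : ℝ) ≤ R) (n - 1)
      nlinarith

/-- The cutoff competitor w_R(x,y) = m + min(1, max(0, |x|−(R−1)))·(v(x,y)−m)
agrees with v on ∂B_R × (0,1), equals m on C_{R−1}, is bounded by |m| + ‖v‖_∞,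
and has energy 𝓔_R(w_R) ≤ C R^{n−1} with C depending only on n, a, M, ‖v‖_∞,
|m| and ‖F‖_∞. -/
theorem competitor_energy_estimate
    (n : ℕ) (a : ℝ) (ha : a ∈ Set.Ioo (-1 : ℝ) 1)
    (F : ℝ → ℝ) (hFcont : Continuous F) (hFpos : ∀ t, 0 ≤ F t)
    (KF : ℝ) (hFbd : ∀ t, F t ≤ KF)
    (m : ℝ) (hFm : F m = 0)
    (v : EuclideanSpace ℝ (Fin n) × ℝ → ℝ) (K M : ℝ)
    (hvbd : ∀ p, |v p| ≤ K)
    (hvgrad : ∀ p, ‖fderiv ℝ v p‖ ≤ M)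
    (w : ℝ → EuclideanSpace ℝ (Fin n) × ℝ → ℝ)
    (hw : ∀ R p, w R p = m + min 1 (max 0 (‖p.1‖ - (R - 1))) * (v p - m)) :
    (∀ R : ℝ, 2 ≤ R →
      -- agrees with v on the lateral boundary ∂B_R × (0,1)
      (∀ x : EuclideanSpace ℝ (Fin n), ∀ y ∈ Set.Ioo (0:ℝ) 1,
        ‖x‖ = R → w R (x, y) = v (x, y))
      -- equals m on the smaller cylinder C_{R-1}
      ∧ (∀ x : EuclideanSpace ℝ (Fin n), ∀ y ∈ Set.Ioo (0:ℝ) 1,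
          ‖x‖ < R - 1 → w R (x, y) = m)
      -- uniform bound
      ∧ (∀ p, |w R p| ≤ |m| + K))
    -- energy estimate: 𝓔_R(w_R) ≤ C R^{n-1}
    ∧ (∃ C : ℝ, 0 < C ∧ ∀ R : ℝ, 2 ≤ R →
        (1 / 2) * (∫ p in (Metric.ball (0 : EuclideanSpace ℝ (Fin n)) R) ×ˢ
              Set.Ioo (0:ℝ) 1, p.2 ^ a * ‖fderiv ℝ (w R) p‖ ^ 2)
          + (∫ x in Metric.ball (0 : EuclideanSpace ℝ (Fin n)) R, F (w R (x, 0)))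
        ≤ C * R ^ (n - 1 : ℕ)) :=
  competitor_energy_estimate_general n a ha F hFpos KF hFbd m hFm v K M hvbd hvgrad w hw
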